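/- (Irrational decomposition of a cone) Let K = v + ℝ_{≥0}w_1 + ⋯ + ℝ_{≥0}w_n ⊆ ℝ^d be a strictly convex rational polyhedral cone (v ∈ ℝ^d, w_i ∈ ℤ^d, and there exists ξ with ξ·w_i > 0 for all i), and let K_1, …, K_l be simple rational cones, each with apex v and generated by d of the vectors w_1, …, w_n, with pairwise disjoint interiors and K = K_1 ∪ ⋯ ∪ K_l. Then there exists s ∈ ℝ^d such that (s+K) ∩ ℤ^d = K ∩ ℤ^d, no integer point lies on the boundary of any s+K_i, and K ∩ ℤ^d is the disjoint union of the sets (s+K_1) ∩ ℤ^d, …, (s+K_l) ∩ ℤ^d. -/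

import Mathlib

open scoped BigOperators Classical

noncomputable section

/-- The real vector corresponding to an integer vector. -/
def toR (d : ℕ) (m : Fin d → ℤ) : Fin d → ℝ := fun i => (m i : ℝ)

/-- The standard dot product on `ℝ^d`. -/
def dotR (d : ℕ) (x y : Fin d → ℝ) : ℝ := ∑ i, x i * y i

/-- Laurent polynomials `ℂ[x₁^{±1},…,x_d^{±1}]`, represented by their coefficient functions. -/
abbrev LaurentPoly (d : ℕ) := (Fin d → ℤ) →₀ ℂ

/-- The integer-point generating series of a subset of `ℝ^d`: the function `ℤ^d → ℂ`
equal to `1` on `S ∩ ℤ^d` and `0` elsewhere. -/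
def genSeries (d : ℕ) (S : Set (Fin d → ℝ)) : (Fin d → ℤ) → ℂ :=
  fun m => if toR d m ∈ S then 1 else 0

/-- The action of a Laurent polynomial on a formal Laurent series,
`(x^w · S)(m) = S(m - w)` extended linearly. -/
def actLP (d : ℕ) (g : LaurentPoly d) (S : (Fin d → ℤ) → ℂ) : (Fin d → ℤ) → ℂ :=
  fun m => ∑ w ∈ g.support, g w * S (m - w)

/-- The series of a Laurent polynomial `f`, i.e. `Σ_m f_m x^m` as a formal series. -/
def seriesOf (d : ℕ) (f : LaurentPoly d) : (Fin d → ℤ) → ℂ := fun m => f m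

/-- The cone `v + ℝ_{≥0} w₁ + ⋯ + ℝ_{≥0} w_n`. -/
def coneSet (d n : ℕ) (v : Fin d → ℝ) (w : Fin n → Fin d → ℤ) : Set (Fin d → ℝ) :=
  {y | ∃ lam : Fin n → ℝ, (∀ i, 0 ≤ lam i) ∧ y = v + ∑ i, lam i • toR d (w i)}

/-- The fundamental half-open parallelepiped `{v + Σ λᵢ wᵢ : 0 ≤ λᵢ < 1}`. -/
def parSet (d : ℕ) (v : Fin d → ℝ) (w : Fin d → Fin d → ℤ) : Set (Fin d → ℝ) :=
  {y | ∃ lam : Fin d → ℝ, (∀ i, 0 ≤ lam i ∧ lam i < 1) ∧ y = v + ∑ i, lam i • toR d (w i)}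

/-- A simple rational cone: `v + ℝ_{≥0} w₁ + ⋯ + ℝ_{≥0} w_d` with `w₁,…,w_d ∈ ℤ^d`
linearly independent. -/
def IsSimpleCone (d : ℕ) (K : Set (Fin d → ℝ)) : Prop :=
  ∃ (v : Fin d → ℝ) (w : Fin d → Fin d → ℤ),
    LinearIndependent ℝ (fun i => toR d (w i)) ∧ K = coneSet d d v w

/-- Membership in the module `PL` of polyhedral Laurent series: a finite
`ℂ[x₁^{±1},…,x_d^{±1}]`-linear combination of the series of simple rational cones. -/
def MemPL (d : ℕ) (S : (Fin d → ℤ) → ℂ) : Prop :=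
  ∃ (n : ℕ) (g : Fin n → LaurentPoly d) (K : Fin n → Set (Fin d → ℝ)),
    (∀ i, IsSimpleCone d (K i)) ∧ S = ∑ i, actLP d (g i) (genSeries d (K i))

/-- The field of rational functions `ℂ(x₁,…,x_d)`. -/
abbrev RatF (d : ℕ) := FractionRing (MvPolynomial (Fin d) ℂ)

/-- The monomial `x^w`, `w ∈ ℤ^d`, as a rational function. -/
def ratMon (d : ℕ) (w : Fin d → ℤ) : RatF d :=
  ∏ i, (algebraMap (MvPolynomial (Fin d) ℂ) (RatF d) (MvPolynomial.X i)) ^ (w i)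

/-- A Laurent polynomial as a rational function. -/
def toRat (d : ℕ) (g : LaurentPoly d) : RatF d :=
  ∑ w ∈ g.support, algebraMap (MvPolynomial (Fin d) ℂ) (RatF d) (MvPolynomial.C (g w)) * ratMon d w

/-- `σ_S(x) = Σ_{m ∈ S ∩ ℤ^d} x^m`, as a rational function (for `S` with finitely many
integer points). -/
def sigmaSet (d : ℕ) (S : Set (Fin d → ℝ)) : RatF d :=
  ∑ᶠ m ∈ {m : Fin d → ℤ | toR d m ∈ S}, ratMon d m

/-- `φ : PL → ℂ(x₁,…,x_d)` is the `ℂ[x₁^{±1},…,x_d^{±1}]`-module homomorphism sending the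
series `S_K` of a simple rational cone `K` to `σ_{P_K}(x) / Π (1 - x^{wᵢ})`. -/
def IsPhi (d : ℕ) (φ : ((Fin d → ℤ) → ℂ) → RatF d) : Prop :=
  (∀ S T, MemPL d S → MemPL d T → φ (S + T) = φ S + φ T) ∧
  (∀ (g : LaurentPoly d) (S), MemPL d S → φ (actLP d g S) = toRat d g * φ S) ∧
  (∀ (v : Fin d → ℝ) (w : Fin d → Fin d → ℤ),
      LinearIndependent ℝ (fun i => toR d (w i)) →
      φ (genSeries d (coneSet d d v w)) =
        sigmaSet d (parSet d v w) / ∏ i, (1 - ratMon d (w i)))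

/-- A convex polyhedron: an intersection of finitely many closed halfspaces. -/
def IsPolyhedron (d : ℕ) (P : Set (Fin d → ℝ)) : Prop :=
  ∃ (n : ℕ) (a : Fin n → Fin d → ℝ) (b : Fin n → ℝ),
    P = {y | ∀ i, dotR d (a i) y ≤ b i}

/-- The polar `P^∨ = {x : ⟨x,y⟩ ≤ 1 for all y ∈ P}`. -/
def polar (d : ℕ) (P : Set (Fin d → ℝ)) : Set (Fin d → ℝ) :=
  {x | ∀ y ∈ P, dotR d x y ≤ 1}


/-!
In the coordinates of its generators a simple cone is `K_t = {z | ∀ i, 0 ≤ coordᵢ (z - v)}`.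
By Cramer's rule the coordinates of lattice points lie in `(1/D)ℤ`, so a negative coordinate of
`m - v` is at most some fixed `-δ < 0`: a small enough translation `a` cannot carry a lattice
point outside `K_t` into `K_t`. Take `a` moreover with positive coordinates with respect to the
generators of one of the `K_t`, so that `a + K ⊆ K`, and off the countably many (measure zero)
hyperplanes on which some `a + m` would lie on a facet of some `K_t`. Then `s = -a` works: the
`K_t` cover `K`, and a lattice point of `s + K_t` is interior to it, so it lies in only one.
-/

open Filter Topology MeasureTheory

theorem exists_pos_forall_int_div_add_le (D : ℝ) (hD : D ≠ 0) (c : ℝ) :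
    ∃ δ > 0, ∀ k : ℤ, k / D + c < 0 → k / D + c ≤ -δ := by
  wlog hDpos : 0 < D generalizing D
  · obtain ⟨δ, hδ, h⟩ :=
      this (-D) (neg_ne_zero.2 hD) (by linarith [hD.lt_or_gt.resolve_right hDpos])
    refine ⟨δ, hδ, fun k hk => ?_⟩
    have hk' : ((-k : ℤ) : ℝ) / -D = k / D := by push_cast; rw [neg_div_neg_eq]
    simpa [hk'] using h (-k) (by rwa [hk'])
  -- the values `k / D + c` below `0` stop at the one with `k = ⌈-c * D⌉ - 1`
  refine ⟨(1 - c * D - ⌈-c * D⌉) / D, div_pos ?_ hDpos, fun k hk => ?_⟩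
  · linarith [Int.ceil_lt_add_one (-c * D)]
  have hlt : (k : ℝ) < -c * D := by
    linarith [(div_lt_iff₀ hDpos).1 (show (k : ℝ) / D < -c by linarith)]
  have hle : (k : ℝ) ≤ ⌈-c * D⌉ - 1 := by
    exact_mod_cast Int.le_sub_one_of_lt (Int.lt_ceil.2 hlt)
  calc k / D + c = (k + c * D) / D := by field_simp
    _ ≤ (⌈-c * D⌉ - 1 + c * D) / D := by gcongr
    _ = -((1 - c * D - ⌈-c * D⌉) / D) := by ring

theorem exists_mem_forall_apply_ne {E ι : Type*} [NormedAddCommGroup E] [NormedSpace ℝ E]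
    [FiniteDimensional ℝ E] [Countable ι] {U : Set E} (hU : IsOpen U) (hne : U.Nonempty)
    (f : ι → E →ₗ[ℝ] ℝ) (hf : ∀ i, f i ≠ 0) (r : ι → ℝ) :
    ∃ x ∈ U, ∀ i, f i x ≠ r i := by
  borelize E
  have hlevel : ∀ i, Measure.addHaar {x | f i x = r i} = 0 := by
    intro i
    obtain ⟨x₀, hx₀⟩ := LinearMap.surjective_of_ne_zero (hf i) (r i)
    have : {x | f i x = r i} = (AffineSubspace.mk' x₀ (LinearMap.ker (f i)) : Set E) := by
      ext x
      simp [AffineSubspace.mem_mk', sub_eq_zero, hx₀]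
    rw [this]
    refine Measure.addHaar_affineSubspace _ _ fun htop => hf i ?_
    simpa using congrArg AffineSubspace.direction htop
  by_contra! hcover
  have : U ⊆ ⋃ i, {x | f i x = r i} := fun x hx => Set.mem_iUnion.2 (hcover x hx)
  exact (hU.measure_pos Measure.addHaar hne).ne'
    (measure_mono_null this (measure_iUnion_null hlevel))

theorem Module.Basis.exists_mem_forall_repr_pos {E ι : Type*} [NormedAddCommGroup E]
    [NormedSpace ℝ E] [Fintype ι] (b : Module.Basis ι ℝ E) {V : Set E} (hV : V ∈ 𝓝 0) :
    ∃ x ∈ V, ∀ i, 0 < b.repr x i := by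
  have hlim : Tendsto (fun ε : ℝ => ε • ∑ i, b i) (𝓝[>] 0) (𝓝 0) :=
    ((continuous_id.smul continuous_const).tendsto' (0 : ℝ) _ (zero_smul ℝ _)).mono_left
      nhdsWithin_le_nhds
  obtain ⟨ε, hεV, hε⟩ := ((hlim.eventually hV).and self_mem_nhdsWithin).exists
  refine ⟨_, hεV, fun i => ?_⟩
  simpa [Finset.smul_sum] using hε

section SimpleCone

variable {d : ℕ} {u : Fin d → Fin d → ℤ} (hu : LinearIndependent ℝ fun i => toR d (u i))

def coneBasis : Module.Basis (Fin d) ℝ (Fin d → ℝ) :=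
  basisOfLinearIndependentOfCardEqFinrank' _ hu (by simp)

@[simp]
theorem coe_coneBasis : ⇑(coneBasis hu) = fun i => toR d (u i) :=
  coe_basisOfLinearIndependentOfCardEqFinrank' _ _ _

include hu in
theorem mem_coneSet_iff_repr_nonneg (v z : Fin d → ℝ) :
    z ∈ coneSet d d v u ↔ ∀ i, 0 ≤ (coneBasis hu).repr (z - v) i := by
  constructor
  · rintro ⟨lam, hlam, rfl⟩ i
    have := (coneBasis hu).repr_sum_self lam
    simp only [coe_coneBasis] at this
    rw [add_sub_cancel_left, this]
    exact hlam i
  · intro h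
    refine ⟨_, h, ?_⟩
    have := (coneBasis hu).sum_repr (z - v)
    simp only [coe_coneBasis] at this
    rw [this]
    abel

theorem exists_repr_eq_zero_of_mem_frontier_coneSet {v z : Fin d → ℝ}
    (hz : z ∈ frontier (coneSet d d v u)) : ∃ i, (coneBasis hu).repr (z - v) i = 0 := by
  have hcont : ∀ i, Continuous fun y => (coneBasis hu).repr (y - v) i := fun i =>
    ((coneBasis hu).coord i).continuous_of_finiteDimensional.comp
      (continuous_id.sub continuous_const)
  have hK : coneSet d d v u = {y | ∀ i, 0 ≤ (coneBasis hu).repr (y - v) i} :=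
    Set.ext (mem_coneSet_iff_repr_nonneg hu v)
  have hclosed : IsClosed (coneSet d d v u) := by
    rw [hK, Set.ofPred_forall]
    exact isClosed_iInter fun i => isClosed_le continuous_const (hcont i)
  rw [hclosed.frontier_eq] at hz
  by_contra! hne
  refine hz.2 (interior_maximal (t := {y | ∀ i, 0 < (coneBasis hu).repr (y - v) i}) ?_ ?_ ?_)
  · exact fun y hy => hK ▸ fun i => (hy i).le
  · rw [Set.ofPred_forall]
    exact isOpen_iInter_of_finite fun i => isOpen_lt continuous_const (hcont i)
  · exact fun i => ((hK ▸ hz.1 : z ∈ {y | _}) i).lt_of_ne' (hne i)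

theorem exists_coneBasis_repr_toR_eq_int_div :
    ∃ D ≠ (0 : ℝ), ∀ (m : Fin d → ℤ) i,
      ∃ k : ℤ, (coneBasis hu).repr (toR d m) i = k / D := by
  set e := Pi.basisFun ℝ (Fin d)
  refine ⟨e.det (coneBasis hu), (e.isUnit_det _).ne_zero, fun m i => ?_⟩
  have hcramer : e.det (coneBasis hu) * (coneBasis hu).repr (toR d m) i =
      e.det (Function.update (coneBasis hu) i (toR d m)) := by
    have := congrArg (· (toR d m)) (e.det_smul_mk_coord_eq_det_update hu
      (hu.span_eq_top_of_card_eq_finrank' (by simp)).ge i)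
    simp only [LinearMap.smul_apply, MultilinearMap.toLinearMap_apply, smul_eq_mul,
      Module.Basis.coord_apply] at this
    rw [coe_coneBasis]
    exact this
  have hupdate : Function.update (coneBasis hu) i (toR d m) =
      fun j => toR d (Function.update u i m j) := by
    ext j : 1
    rw [coe_coneBasis, Function.apply_update (fun _ => toR d) u i m j]
  refine ⟨(Matrix.of (Function.update u i m)).det, eq_div_of_mul_eq (e.isUnit_det _).ne_zero ?_⟩
  rw [mul_comm, hcramer, hupdate, Pi.basisFun_det_apply]
  exact ((Int.castRingHom ℝ).map_det _).symm

include hu in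
theorem eventually_mem_coneSet_of_add_mem (v : Fin d → ℝ) :
    ∀ᶠ a in 𝓝 0, ∀ m : Fin d → ℤ,
      a + toR d m ∈ coneSet d d v u → toR d m ∈ coneSet d d v u := by
  obtain ⟨D, hD, hrat⟩ := exists_coneBasis_repr_toR_eq_int_div hu
  set b := coneBasis hu
  choose δ hδ hgap using fun i => exists_pos_forall_int_div_add_le D hD (-b.repr v i)
  have hsmall : ∀ᶠ a in 𝓝 0, ∀ i, |b.repr a i| < δ i := by
    refine eventually_all.2 fun i => ?_
    have := (b.coord i).continuous_of_finiteDimensional.abs.continuousAt (x := 0)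
    exact this.eventually (gt_mem_nhds (by simpa using hδ i))
  filter_upwards [hsmall] with a ha m ham
  rw [mem_coneSet_iff_repr_nonneg hu] at ham ⊢
  intro i
  obtain ⟨k, hk⟩ := hrat m i
  have hm : b.repr (toR d m - v) i = k / D + -b.repr v i := by simp [sub_eq_add_neg, hk]
  have hsplit : b.repr (a + toR d m - v) i = b.repr a i + b.repr (toR d m - v) i := by
    simp [add_sub_assoc]
  by_contra! hneg
  rw [hm] at hneg
  linarith [ham i, hgap i k hneg, (abs_lt.1 (ha i)).2]

end SimpleCone

theorem sum_smul_add_mem_coneSet {d n : ℕ} {v z : Fin d → ℝ} {w : Fin n → Fin d → ℤ}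
    (hz : z ∈ coneSet d n v w) {ι : Type*} [Fintype ι] (g : ι → Fin n) {μ : ι → ℝ}
    (hμ : ∀ j, 0 ≤ μ j) : ∑ j, μ j • toR d (w (g j)) + z ∈ coneSet d n v w := by
  obtain ⟨lam, hlam, rfl⟩ := hz
  refine ⟨fun i => lam i + ∑ j, if g j = i then μ j else 0,
    fun i => add_nonneg (hlam i) (Finset.sum_nonneg fun j _ => by split_ifs <;> simp [hμ j]), ?_⟩
  simp only [add_smul, Finset.sum_add_distrib, Finset.sum_smul, ite_smul, zero_smul]
  rw [Finset.sum_comm]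
  simp only [Finset.sum_ite_eq, Finset.mem_univ, if_true]
  abel

theorem exists_translation_adapted_to_simple_cones {d l : ℕ} (v : Fin d → ℝ)
    {u : Fin l → Fin d → Fin d → ℤ}
    (hu : ∀ t, LinearIndependent ℝ fun i => toR d (u t i)) (t₀ : Fin l) :
    ∃ a : Fin d → ℝ, (∀ i, 0 ≤ (coneBasis (hu t₀)).repr a i) ∧
      (∀ t (m : Fin d → ℤ),
        a + toR d m ∈ coneSet d d v (u t) → toR d m ∈ coneSet d d v (u t)) ∧
      (∀ t (m : Fin d → ℤ), a + toR d m ∉ frontier (coneSet d d v (u t))) := by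
  have hlift := eventually_all.2 fun t => eventually_mem_coneSet_of_add_mem (hu t) v
  obtain ⟨V, hVlift, hV, h0V⟩ := eventually_nhds_iff.1 hlift
  set U := {a | ∀ i, 0 < (coneBasis (hu t₀)).repr a i} ∩ V
  have hU : IsOpen U := by
    refine IsOpen.inter ?_ hV
    rw [Set.ofPred_forall]
    exact isOpen_iInter_of_finite fun i => isOpen_lt continuous_const
      ((coneBasis (hu t₀)).coord i).continuous_of_finiteDimensional
  obtain ⟨a₀, ha₀, ha₀pos⟩ :=
    (coneBasis (hu t₀)).exists_mem_forall_repr_pos (hV.mem_nhds h0V)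
  have hcoord : ∀ t i, (coneBasis (hu t)).coord i ≠ 0 := fun t i h => by
    simpa only [Module.Basis.coord_apply, Module.Basis.repr_self, Finsupp.single_eq_same,
      LinearMap.zero_apply, one_ne_zero] using congrArg (· (coneBasis (hu t) i)) h
  -- for `p = (t, i, m)`, `a` avoids the hyperplane where coordinate `i` of `a + m - v` in `K_t`
  -- vanishes
  obtain ⟨a, ⟨hpos, haV⟩, hgeneric⟩ :=
    exists_mem_forall_apply_ne hU ⟨a₀, ha₀pos, ha₀⟩
      (fun p : Fin l × Fin d × (Fin d → ℤ) => (coneBasis (hu p.1)).coord p.2.1)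
      (fun p => hcoord p.1 p.2.1)
      (fun p => -(coneBasis (hu p.1)).repr (toR d p.2.2 - v) p.2.1)
  refine ⟨a, fun i => (hpos i).le, hVlift a haV, fun t m hm => ?_⟩
  obtain ⟨i, hi⟩ := exists_repr_eq_zero_of_mem_frontier_coneSet (hu t) hm
  refine hgeneric (t, i, m) ?_
  rw [add_sub_assoc, map_add, Finsupp.add_apply] at hi
  simp only [Module.Basis.coord_apply]
  linarith

theorem statement12_general (d n l : ℕ) (v : Fin d → ℝ) (w : Fin n → Fin d → ℤ)
    (sel : Fin l → Fin d → Fin n)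
    (hsimp : ∀ t, LinearIndependent ℝ (fun i => toR d (w (sel t i))))
    (hdisj : ∀ t t', t ≠ t' →
      Disjoint (interior (coneSet d d v (fun i => w (sel t i))))
        (interior (coneSet d d v (fun i => w (sel t' i)))))
    (hcover : coneSet d n v w = ⋃ t, coneSet d d v (fun i => w (sel t i))) :
    ∃ s : Fin d → ℝ,
      (∀ m : Fin d → ℤ,
        toR d m ∈ (fun y => s + y) '' coneSet d n v w ↔ toR d m ∈ coneSet d n v w) ∧
      (∀ (t : Fin l) (m : Fin d → ℤ),
        toR d m ∉ frontier ((fun y => s + y) '' coneSet d d v (fun i => w (sel t i)))) ∧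
      (∀ m : Fin d → ℤ, toR d m ∈ coneSet d n v w ↔
        ∃! t : Fin l, toR d m ∈ (fun y => s + y) '' coneSet d d v (fun i => w (sel t i))) := by
  have hapex : v ∈ coneSet d n v w := ⟨0, fun _ => le_rfl, by simp⟩
  obtain ⟨t₀, -⟩ := Set.mem_iUnion.1 (hcover ▸ hapex)
  obtain ⟨a, hpos, hlift, hfront⟩ := exists_translation_adapted_to_simple_cones v hsimp t₀
  have hshift : ∀ z ∈ coneSet d n v w, a + z ∈ coneSet d n v w := fun z hz => by
    have := (coneBasis (hsimp t₀)).sum_repr a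
    simp only [coe_coneBasis] at this
    simpa [this] using sum_smul_add_mem_coneSet hz (sel t₀) hpos
  have hK : ∀ m, a + toR d m ∈ coneSet d n v w ↔ toR d m ∈ coneSet d n v w := fun m =>
    ⟨fun h => by
      obtain ⟨t, ht⟩ := Set.mem_iUnion.1 (hcover ▸ h)
      exact hcover ▸ Set.mem_iUnion.2 ⟨t, hlift t m ht⟩, hshift _⟩
  have hmem : ∀ S x, x ∈ (fun y => -a + y) '' S ↔ a + x ∈ S := by simp [Set.image_add_left]
  refine ⟨-a, fun m => (hmem _ _).trans (hK m), fun t m => ?_, fun m => ?_⟩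
  · rw [← Homeomorph.coe_addLeft, ← Homeomorph.image_frontier, Homeomorph.coe_addLeft, hmem]
    exact hfront t m
  · simp_rw [← hK, hcover, Set.mem_iUnion, hmem]
    refine ⟨fun ⟨t, ht⟩ => ⟨t, ht, fun t' ht' => ?_⟩, fun ⟨t, ht, _⟩ => ⟨t, ht⟩⟩
    by_contra hne
    exact Set.disjoint_left.1 (hdisj t' t hne)
      ((self_sdiff_frontier _).subset ⟨ht', hfront t' m⟩)
      ((self_sdiff_frontier _).subset ⟨ht, hfront t m⟩)

/-- **Irrational decomposition of a cone.** Let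
`K = v + ℝ_{≥0}w₁ + ⋯ + ℝ_{≥0}w_n` be a strictly convex rational cone, decomposed into
simple cones `K_t` (each with apex `v`, generated by `d` of the `wᵢ`) with pairwise
disjoint interiors. Then there is `s ∈ ℝ^d` with `(s+K) ∩ ℤ^d = K ∩ ℤ^d`, no integer
point on the boundary of any `s+K_t`, and `K ∩ ℤ^d` the disjoint union of the
`(s+K_t) ∩ ℤ^d`. -/
theorem statement12 (d n l : ℕ) (v : Fin d → ℝ) (w : Fin n → Fin d → ℤ)
    (xi : Fin d → ℝ) (hxi : ∀ i, 0 < dotR d xi (toR d (w i)))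
    (sel : Fin l → Fin d → Fin n)
    (hsimp : ∀ t, LinearIndependent ℝ (fun i => toR d (w (sel t i))))
    (hdisj : ∀ t t', t ≠ t' →
      Disjoint (interior (coneSet d d v (fun i => w (sel t i))))
        (interior (coneSet d d v (fun i => w (sel t' i)))))
    (hcover : coneSet d n v w = ⋃ t, coneSet d d v (fun i => w (sel t i))) :
    ∃ s : Fin d → ℝ,
      (∀ m : Fin d → ℤ,
        toR d m ∈ (fun y => s + y) '' coneSet d n v w ↔ toR d m ∈ coneSet d n v w) ∧
      (∀ (t : Fin l) (m : Fin d → ℤ),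
        toR d m ∉ frontier ((fun y => s + y) '' coneSet d d v (fun i => w (sel t i)))) ∧
      (∀ m : Fin d → ℤ, toR d m ∈ coneSet d n v w ↔
        ∃! t : Fin l, toR d m ∈ (fun y => s + y) '' coneSet d d v (fun i => w (sel t i))) :=
  statement12_general d n l v w sel hsimp hdisj hcover

end
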